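/- Let T>0, let u:[0,T)×ℝ→ℝ be bounded and upper semicontinuous, let v:[0,T)×ℝ→ℝ be bounded and lower semicontinuous, and let u₀:ℝ→ℝ be Lipschitz continuous with u(0,·) ≤ u₀ ≤ v(0,·). Assume M := sup{u(t,x)−v(t,x) : 0<t<T, x∈ℝ} > 0. Then there exist ε₀, α₀, η₀ > 0, depending only on M, T, sup|u|, sup|v| and the Lipschitz constant of u₀, such that for every K ≥ 0, ε ∈ (0,ε₀], α ∈ (0,α₀], η ∈ (0,η₀]: the supremum M_{ε,α} := sup{ u(t,x) − v(t,y) − e^{Kt}·(x−y)²/(2ε) − η/(T−t) − α·x²/2 : 0<t<T, x,y∈ℝ } is attained at some point (t,x,y) with t>0, and moreover M_{ε,α} > M/3, |x−y| ≤ C₀·√ε and α·|x| ≤ C₀·√α, where C₀ is a constant depending only on sup|u| and sup|v|. -/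

import Mathlib

open Set Real

/-!
Pick `(t̄, x̄)` with `u - v > 2M/3` there; for small `ε, α, η` the penalized function `Φ` still
exceeds `M/3` at `(t̄, x̄, x̄)`. With `C := sup|u| + sup|v|`, wherever `Φ ≥ 0` each penalty is at
most `C`: `η/(T-t) ≤ C`, `αx²/2 ≤ C`, `(x-y)²/(2ε) ≤ C`. Hence the superlevel set of `Φ` through
`(t̄, x̄, x̄)` lies in a compact box bounded away from `t = T`, on which the upper semicontinuous
`Φ` attains its maximum. At `t = 0` the ordering `u(0,·) ≤ u₀ ≤ v(0,·)` and Young's inequality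
for the Lipschitz `u₀` give `Φ ≤ εL²/2 ≤ M/6`, so the maximum is attained at `t > 0`; the penalty
bounds there give the estimates with `C₀ = √(2C)`.
-/

theorem IsCompact.exists_isMaxOn_of_superlevelSet_subset {α β : Type*} [TopologicalSpace α]
    [LinearOrder β] {f : α → β} {s K : Set α} {q : α} (hK : IsCompact K)
    (hf : UpperSemicontinuousOn f K) (hq : q ∈ K) (hsub : ∀ p ∈ s, f q ≤ f p → p ∈ K) :
    ∃ p ∈ K, IsMaxOn f s p := by
  obtain ⟨p, hpK, hp⟩ := hf.exists_isMaxOn ⟨q, hq⟩ hK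
  refine ⟨p, hpK, fun z hz => ?_⟩
  by_cases h : f q ≤ f z
  · exact hp (hsub z hz h)
  · exact (lt_of_not_ge h).le.trans (hp hq)

theorem abs_le_sqrt_mul_sqrt {a b c : ℝ} (hb : 0 ≤ b) (h : a ^ 2 ≤ b * c) : |a| ≤ √b * √c := by
  rw [← Real.sqrt_mul hb]
  exact Real.abs_le_sqrt h

theorem abs_sub_le_sqrt_and_mul_abs_le_sqrt {x y ε α C : ℝ} (hε : 0 < ε) (hα : 0 < α)
    (hxy : (x - y) ^ 2 / (2 * ε) ≤ C) (hx : α * x ^ 2 / 2 ≤ C) :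
    |x - y| ≤ √(2 * C) * √ε ∧ α * |x| ≤ √(2 * C) * √α := by
  have hC : 0 ≤ C := le_trans (by positivity) hxy
  rw [div_le_iff₀ (by positivity)] at hxy
  refine ⟨abs_le_sqrt_mul_sqrt (by positivity) (by linarith), ?_⟩
  rw [show α * |x| = |α * x| by rw [abs_mul, abs_of_pos hα]]
  exact abs_le_sqrt_mul_sqrt (by positivity) (by nlinarith)

theorem LipschitzWith.sub_sub_sq_div_le {f : ℝ → ℝ} {L : NNReal} (hf : LipschitzWith L f)
    {ε : ℝ} (hε : 0 < ε) (x y : ℝ) : f x - f y - (x - y) ^ 2 / (2 * ε) ≤ ε * L ^ 2 / 2 := by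
  have hfxy : f x - f y ≤ L * |x - y| := (le_abs_self _).trans (hf.dist_le_mul x y)
  have hsq : L * |x - y| - (x - y) ^ 2 / (2 * ε) =
      ε * L ^ 2 / 2 - (|x - y| - ε * L) ^ 2 / (2 * ε) := by
    rw [← sq_abs (x - y)]
    field_simp
    ring
  have : 0 ≤ (|x - y| - ε * L) ^ 2 / (2 * ε) := by positivity
  linarith

/-- `Φ(t, x, y)`, taken as a function of `p = (t, x, y)`. -/
noncomputable def penalized (u v : ℝ → ℝ → ℝ) (T K ε η α : ℝ) (p : ℝ × ℝ × ℝ) : ℝ :=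
  u p.1 p.2.1 - v p.1 p.2.2 - exp (K * p.1) * (p.2.1 - p.2.2) ^ 2 / (2 * ε) - η / (T - p.1) -
    α * p.2.1 ^ 2 / 2

section penalized

variable {u v : ℝ → ℝ → ℝ} {T K ε η α : ℝ}

theorem penalties_le_of_penalized_nonneg {t x y C : ℝ} (hC : u t x - v t y ≤ C) (hK : 0 ≤ K)
    (ht : 0 ≤ t) (htT : t < T) (hε : 0 < ε) (hη : 0 ≤ η) (hα : 0 ≤ α)
    (h : 0 ≤ penalized u v T K ε η α (t, x, y)) :
    η / (T - t) ≤ C ∧ α * x ^ 2 / 2 ≤ C ∧ (x - y) ^ 2 / (2 * ε) ≤ C := by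
  have hexp : (x - y) ^ 2 / (2 * ε) ≤ exp (K * t) * (x - y) ^ 2 / (2 * ε) := by
    rw [mul_div_assoc]
    exact le_mul_of_one_le_left (by positivity) (one_le_exp (mul_nonneg hK ht))
  have hηt : 0 ≤ η / (T - t) := div_nonneg hη (sub_pos.2 htT).le
  have hαx : 0 ≤ α * x ^ 2 / 2 := by positivity
  have hxy : 0 ≤ (x - y) ^ 2 / (2 * ε) := by positivity
  unfold penalized at h
  refine ⟨?_, ?_, ?_⟩ <;> linarith

theorem penalized_zero_le {u0 : ℝ → ℝ} {L : NNReal} (hord : ∀ x, u 0 x ≤ u0 x ∧ u0 x ≤ v 0 x)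
    (hlip : LipschitzWith L u0) (hT : 0 ≤ T) (hε : 0 < ε) (hη : 0 ≤ η) (hα : 0 ≤ α) (x y : ℝ) :
    penalized u v T K ε η α (0, x, y) ≤ ε * L ^ 2 / 2 := by
  have hηT : 0 ≤ η / T := div_nonneg hη hT
  have hαx : 0 ≤ α * x ^ 2 / 2 := by positivity
  have := hlip.sub_sub_sq_div_le hε x y
  simp only [penalized, mul_zero, exp_zero, one_mul, sub_zero]
  linarith [(hord x).1, (hord y).2]

theorem upperSemicontinuousOn_penalized
    (husc : UpperSemicontinuousOn (fun p : ℝ × ℝ => u p.1 p.2) (Ico 0 T ×ˢ univ))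
    (hlsc : LowerSemicontinuousOn (fun p : ℝ × ℝ => v p.1 p.2) (Ico 0 T ×ˢ univ)) :
    UpperSemicontinuousOn (penalized u v T K ε η α) (Ico 0 T ×ˢ univ) := by
  have hmaps : ∀ f : ℝ × ℝ × ℝ → ℝ, MapsTo (fun p : ℝ × ℝ × ℝ => (p.1, f p))
      (Ico 0 T ×ˢ univ) (Ico 0 T ×ˢ univ) := fun _ p hp => ⟨hp.1, trivial⟩
  have hu : UpperSemicontinuousOn (fun p : ℝ × ℝ × ℝ => u p.1 p.2.1) (Ico 0 T ×ˢ univ) :=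
    husc.comp (by fun_prop) (hmaps _)
  have hv : UpperSemicontinuousOn (fun p : ℝ × ℝ × ℝ => -v p.1 p.2.2) (Ico 0 T ×ˢ univ) :=
    (continuous_neg.comp_lowerSemicontinuousOn_antitone hlsc fun _ _ h => neg_le_neg h).comp
      (by fun_prop) (hmaps _)
  have hrest : ContinuousOn (fun p : ℝ × ℝ × ℝ => -(exp (K * p.1) * (p.2.1 - p.2.2) ^ 2 / (2 * ε))
      - η / (T - p.1) - α * p.2.1 ^ 2 / 2) (Ico 0 T ×ˢ univ) := by
    refine ContinuousOn.sub (ContinuousOn.sub (by fun_prop) ?_) (by fun_prop)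
    exact continuousOn_const.div (by fun_prop) fun p hp => (sub_pos.2 hp.1.2).ne'
  have hsplit : penalized u v T K ε η α = fun p => u p.1 p.2.1 + -v p.1 p.2.2 +
      (-(exp (K * p.1) * (p.2.1 - p.2.2) ^ 2 / (2 * ε)) - η / (T - p.1) - α * p.2.1 ^ 2 / 2) := by
    funext p
    simp only [penalized]
    ring
  rw [hsplit]
  exact (hu.add hv).add hrest.upperSemicontinuousOn

theorem penalized_exists_isMaxOn
    (husc : UpperSemicontinuousOn (fun p : ℝ × ℝ => u p.1 p.2) (Ico 0 T ×ˢ univ))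
    (hlsc : LowerSemicontinuousOn (fun p : ℝ × ℝ => v p.1 p.2) (Ico 0 T ×ˢ univ)) {C : ℝ}
    (hC : ∀ t x y, 0 ≤ t → t < T → u t x - v t y ≤ C) (hK : 0 ≤ K) (hε : 0 < ε) (hη : 0 < η)
    (hα : 0 < α) {q : ℝ × ℝ × ℝ} (hq : q ∈ Ico 0 T ×ˢ univ)
    (hq_nonneg : 0 ≤ penalized u v T K ε η α q) :
    ∃ p ∈ Ico 0 T ×ˢ univ, IsMaxOn (penalized u v T K ε η α) (Ico 0 T ×ˢ univ) p := by
  have hCpos : 0 < C := (div_pos hη (sub_pos.2 hq.1.2)).trans_le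
    (penalties_le_of_penalized_nonneg (hC _ _ _ hq.1.1 hq.1.2) hK hq.1.1 hq.1.2 hε hη.le hα.le
      hq_nonneg).1
  set R := √(2 * C / α) + √(2 * ε * C)
  set box : Set (ℝ × ℝ × ℝ) := Icc 0 (T - η / C) ×ˢ (Icc (-R) R ×ˢ Icc (-R) R)
  have hbox : box ⊆ Ico 0 T ×ˢ univ := fun p hp =>
    ⟨⟨hp.1.1, hp.1.2.trans_lt (sub_lt_self T (div_pos hη hCpos))⟩, trivial⟩
  have hsub : ∀ p ∈ Ico 0 T ×ˢ univ,
      penalized u v T K ε η α q ≤ penalized u v T K ε η α p → p ∈ box := by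
    rintro ⟨t, x, y⟩ ⟨⟨ht, htT⟩, -⟩ hp
    obtain ⟨hηC, hxC, hxyC⟩ :=
      penalties_le_of_penalized_nonneg (hC t x y ht htT) hK ht htT hε hη.le hα.le
        (hq_nonneg.trans hp)
    have hx : |x| ≤ √(2 * C / α) := abs_le_sqrt (by rw [le_div_iff₀ hα]; linarith)
    have hxy : |x - y| ≤ √(2 * ε * C) := abs_le_sqrt (by
      rw [div_le_iff₀ (by positivity)] at hxyC; linarith)
    have hy : |y| ≤ R := by
      have := abs_sub_abs_le_abs_sub y x
      rw [abs_sub_comm] at this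
      linarith
    have ht' : t ≤ T - η / C := by
      rw [div_le_iff₀ (sub_pos.2 htT)] at hηC
      rw [le_sub_comm, div_le_iff₀ hCpos]
      linarith
    exact ⟨⟨ht, ht'⟩, abs_le.1 (by linarith [sqrt_nonneg (2 * ε * C)]), abs_le.1 hy⟩
  obtain ⟨p, hp, hmax⟩ := IsCompact.exists_isMaxOn_of_superlevelSet_subset
    (isCompact_Icc.prod (isCompact_Icc.prod isCompact_Icc))
    ((upperSemicontinuousOn_penalized husc hlsc).mono hbox) (hsub q hq le_rfl) hsub
  exact ⟨p, hbox hp, hmax⟩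

end penalized

theorem penalization (T : ℝ) (hT : 0 < T) (u v : ℝ → ℝ → ℝ) (u0 : ℝ → ℝ)
    (husc : UpperSemicontinuousOn (fun p : ℝ × ℝ => u p.1 p.2) (Set.Ico 0 T ×ˢ Set.univ))
    (hlsc : LowerSemicontinuousOn (fun p : ℝ × ℝ => v p.1 p.2) (Set.Ico 0 T ×ˢ Set.univ))
    (hub : ∃ Mu : ℝ, ∀ t x : ℝ, 0 ≤ t → t < T → |u t x| ≤ Mu)
    (hvb : ∃ Mv : ℝ, ∀ t x : ℝ, 0 ≤ t → t < T → |v t x| ≤ Mv)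
    (hlip : ∃ L : NNReal, LipschitzWith L u0)
    (hord : ∀ x : ℝ, u 0 x ≤ u0 x ∧ u0 x ≤ v 0 x)
    (M : ℝ) (hM : IsLUB {m : ℝ | ∃ t x : ℝ, 0 < t ∧ t < T ∧ m = u t x - v t x} M)
    (hMpos : 0 < M) :
    ∃ ε0 : ℝ, 0 < ε0 ∧ ∃ α0 : ℝ, 0 < α0 ∧ ∃ η0 : ℝ, 0 < η0 ∧ ∃ C0 : ℝ, 0 < C0 ∧
      ∀ K ε α η : ℝ, 0 ≤ K → 0 < ε → ε ≤ ε0 → 0 < α → α ≤ α0 → 0 < η → η ≤ η0 →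
        ∃ t x y : ℝ, 0 < t ∧ t < T ∧
          (∀ t' x' y' : ℝ, 0 < t' → t' < T →
            u t' x' - v t' y' - Real.exp (K * t') * (x' - y') ^ 2 / (2 * ε) - η / (T - t') -
                α * x' ^ 2 / 2 ≤
              u t x - v t y - Real.exp (K * t) * (x - y) ^ 2 / (2 * ε) - η / (T - t) -
                α * x ^ 2 / 2) ∧
          M / 3 < u t x - v t y - Real.exp (K * t) * (x - y) ^ 2 / (2 * ε) - η / (T - t) -
            α * x ^ 2 / 2 ∧
          |x - y| ≤ C0 * Real.sqrt ε ∧ α * |x| ≤ C0 * Real.sqrt α := by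
  obtain ⟨Mu, hub⟩ := hub
  obtain ⟨Mv, hvb⟩ := hvb
  obtain ⟨L, hlip⟩ := hlip
  obtain ⟨_, ⟨tb, xb, htb, htbT, rfl⟩, hgap, -⟩ := hM.exists_between (by linarith : 2 * M / 3 < M)
  set C := Mu + Mv
  have hC : ∀ t x y, 0 ≤ t → t < T → u t x - v t y ≤ C := fun t x y ht htT => by
    linarith [(abs_le.1 (hub t x ht htT)).2, (abs_le.1 (hvb t y ht htT)).1]
  have hCpos : 0 < C := by linarith [hC tb xb xb htb.le htbT]
  have hTtb : 0 < T - tb := sub_pos.2 htbT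
  refine ⟨M / (3 * (L ^ 2 + 1)), by positivity, M / (3 * (xb ^ 2 + 1)), by positivity,
    M * (T - tb) / 6, by positivity, √(2 * C), by positivity, ?_⟩
  intro K ε α η hK hε hε0 hα hα0 hη hη0
  rw [le_div_iff₀ (by positivity)] at hε0 hα0
  have hq : M / 3 < penalized u v T K ε η α (tb, xb, xb) := by
    have : η / (T - tb) ≤ M / 6 := by rw [div_le_iff₀ hTtb]; linarith
    norm_num [penalized]
    nlinarith
  obtain ⟨⟨t, x, y⟩, ⟨⟨ht, htT⟩, -⟩, hmax⟩ := penalized_exists_isMaxOn husc hlsc hC hK hε hη hα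
    (q := (tb, xb, xb)) ⟨⟨htb.le, htbT⟩, trivial⟩ (by linarith)
  have hp : M / 3 < penalized u v T K ε η α (t, x, y) :=
    hq.trans_le (hmax ⟨⟨htb.le, htbT⟩, trivial⟩)
  have htpos : 0 < t := by
    refine ht.lt_of_ne fun h0 => ?_
    subst h0
    nlinarith [penalized_zero_le (K := K) hord hlip hT.le hε hη.le hα.le x y]
  obtain ⟨-, hxC, hxyC⟩ :=
    penalties_le_of_penalized_nonneg (hC t x y ht htT) hK ht htT hε hη.le hα.le (by linarith)
  exact ⟨t, x, y, htpos, htT, fun t' x' y' ht' ht'T =>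
    isMaxOn_iff.1 hmax (t', x', y') ⟨⟨ht'.le, ht'T⟩, trivial⟩, hp,
    abs_sub_le_sqrt_and_mul_abs_le_sqrt hε hα hxyC hxC⟩
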